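/- arXiv:2509.03772 — 3 statements merged into one kernel-verified Lean document; each statement's English description precedes it below -/
import Mathlib

section
/- Suppose λ ≥ 2λ₀ > 0, S ⊆ [p] contains all indices of nonzero rows of B, and the event max_{j∈[p]} (2/(nd))‖(EQ+Δ)ᵀ Z_{·j}‖ ≤ λ₀/√d holds. Then the group-LASSO solution B̂ satisfies (2/(nd))‖Z(B̂ − BQ)‖_F² + (λ/√d)Σ_{j∈Sᶜ}‖B̂_j‖ ≤ (3λ/√d)Σ_{j∈S}‖B̂_j − Qᵀ B_j‖. -/
open scoped BigOperators
open Matrix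

/-- Euclidean norm of the `j`-th row of a matrix. -/
noncomputable def rowNorm {p d : ℕ} (β : Matrix (Fin p) (Fin d) ℝ) (j : Fin p) : ℝ :=
  Real.sqrt (∑ k : Fin d, (β j k) ^ 2)

/-- Squared Frobenius norm. -/
noncomputable def frobSq {m l : ℕ} (M : Matrix (Fin m) (Fin l) ℝ) : ℝ :=
  ∑ i : Fin m, ∑ j : Fin l, (M i j) ^ 2

/-- The group-LASSO objective `(1/(nd))‖X̂ − Zβ‖_F² + (λ/√d) Σ_j ‖β_j‖`. -/
noncomputable def glassoObj {n p d : ℕ} (Z : Matrix (Fin n) (Fin p) ℝ)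
    (Xhat : Matrix (Fin n) (Fin d) ℝ) (lam : ℝ) (β : Matrix (Fin p) (Fin d) ℝ) : ℝ :=
  (1 / ((n : ℝ) * d)) * frobSq (Xhat - Z * β) +
    (lam / Real.sqrt d) * ∑ j : Fin p, rowNorm β j

lemma rowNorm_nonneg {p d : ℕ} (β : Matrix (Fin p) (Fin d) ℝ) (j : Fin p) :
    0 ≤ rowNorm β j := Real.sqrt_nonneg _

lemma sqrt_add_sq_le {d : ℕ} (u v : Fin d → ℝ) :
    Real.sqrt (∑ k : Fin d, (u k + v k)^2) ≤
      Real.sqrt (∑ k : Fin d, (u k)^2) + Real.sqrt (∑ k : Fin d, (v k)^2) := by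
  have hA : (0:ℝ) ≤ ∑ k : Fin d, (u k)^2 := by positivity
  have hB : (0:ℝ) ≤ ∑ k : Fin d, (v k)^2 := by positivity
  have hcs := Real.sum_mul_le_sqrt_mul_sqrt Finset.univ u v
  have key : ∑ k : Fin d, (u k + v k)^2 ≤
      (Real.sqrt (∑ k : Fin d, (u k)^2) + Real.sqrt (∑ k : Fin d, (v k)^2))^2 := by
    have : ∑ k : Fin d, (u k + v k)^2
        = ∑ k : Fin d, (u k)^2 + 2 * (∑ k : Fin d, u k * v k) + ∑ k : Fin d, (v k)^2 := by
      rw [Finset.mul_sum, ← Finset.sum_add_distrib, ← Finset.sum_add_distrib]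
      exact Finset.sum_congr rfl fun k _ => by ring
    rw [this, add_sq, Real.sq_sqrt hA, Real.sq_sqrt hB]
    nlinarith
  calc Real.sqrt (∑ k : Fin d, (u k + v k)^2) ≤
      Real.sqrt ((Real.sqrt (∑ k : Fin d, (u k)^2) + Real.sqrt (∑ k : Fin d, (v k)^2))^2) :=
        Real.sqrt_le_sqrt key
    _ = _ := Real.sqrt_sq (by positivity)

lemma triple_swap {n p d : ℕ} (f : Fin n → Fin d → Fin p → ℝ) :
    ∑ i : Fin n, ∑ k : Fin d, ∑ j : Fin p, f i k j
      = ∑ j : Fin p, ∑ k : Fin d, ∑ i : Fin n, f i k j :=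
  calc ∑ i : Fin n, ∑ k : Fin d, ∑ j : Fin p, f i k j
      = ∑ k : Fin d, ∑ i : Fin n, ∑ j : Fin p, f i k j := Finset.sum_comm
    _ = ∑ k : Fin d, ∑ j : Fin p, ∑ i : Fin n, f i k j :=
        Finset.sum_congr rfl fun _ _ => Finset.sum_comm
    _ = ∑ j : Fin p, ∑ k : Fin d, ∑ i : Fin n, f i k j := Finset.sum_comm

lemma expand_aux {n p d : ℕ} (W : Matrix (Fin n) (Fin d) ℝ) (Z : Matrix (Fin n) (Fin p) ℝ)
    (D : Matrix (Fin p) (Fin d) ℝ) :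
    frobSq (W - Z * D) = frobSq W
      - 2 * (∑ j : Fin p, ∑ k : Fin d, (∑ i : Fin n, W i k * Z i j) * D j k)
      + frobSq (Z * D) := by
  have hIP : (∑ i : Fin n, ∑ k : Fin d, W i k * (Z * D) i k)
      = ∑ j : Fin p, ∑ k : Fin d, (∑ i : Fin n, W i k * Z i j) * D j k := by
    simp only [Matrix.mul_apply, Finset.mul_sum, Finset.sum_mul]
    rw [triple_swap (fun i k j => W i k * (Z i j * D j k))]
    exact Finset.sum_congr rfl fun j _ => Finset.sum_congr rfl fun k _ =>
      Finset.sum_congr rfl fun i _ => by ring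
  rw [← hIP]
  simp only [frobSq]
  rw [Finset.mul_sum, ← Finset.sum_sub_distrib, ← Finset.sum_add_distrib]
  refine Finset.sum_congr rfl fun i _ => ?_
  rw [Finset.mul_sum, ← Finset.sum_sub_distrib, ← Finset.sum_add_distrib]
  refine Finset.sum_congr rfl fun k _ => ?_
  simp only [Matrix.sub_apply]
  ring

/-- Lemma (Lasso2): if `λ ≥ 2λ₀ > 0`, `S` contains all indices of nonzero rows of `B`,
and on the event `max_j (2/(nd))‖(EQ+Δ)ᵀ Z_{·j}‖ ≤ λ₀/√d` (with `E = X − ZB`,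
`Δ = X̂ − XQ`), the group-LASSO solution `B̂` satisfies
`(2/(nd))‖Z(B̂ − BQ)‖_F² + (λ/√d) Σ_{j∈Sᶜ} ‖B̂_j‖ ≤ (3λ/√d) Σ_{j∈S} ‖B̂_j − Qᵀ B_j‖`. -/
theorem glasso_cone_inequality (n p d : ℕ) (hn : 0 < n) (hd : 0 < d)
    (Z : Matrix (Fin n) (Fin p) ℝ) (X Xhat : Matrix (Fin n) (Fin d) ℝ)
    (B Bhat : Matrix (Fin p) (Fin d) ℝ)
    (Q : Matrix (Fin d) (Fin d) ℝ) (hQ : Q ∈ Matrix.orthogonalGroup (Fin d) ℝ)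
    (lam lam0 : ℝ) (hlam0 : 0 < lam0) (hlam : 2 * lam0 ≤ lam)
    (S : Finset (Fin p)) (hS : ∀ j : Fin p, j ∉ S → (fun k => B j k) = 0)
    (hmin : ∀ β : Matrix (Fin p) (Fin d) ℝ,
      glassoObj Z Xhat lam Bhat ≤ glassoObj Z Xhat lam β)
    (hevent : ∀ j : Fin p,
      (2 / ((n : ℝ) * d)) *
          Real.sqrt (∑ k : Fin d,
            (∑ i : Fin n, ((X - Z * B) * Q + (Xhat - X * Q)) i k * Z i j) ^ 2) ≤
        lam0 / Real.sqrt d) :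
    (2 / ((n : ℝ) * d)) * frobSq (Z * (Bhat - B * Q)) +
        (lam / Real.sqrt d) * ∑ j ∈ Sᶜ, rowNorm Bhat j ≤
      (3 * lam / Real.sqrt d) * ∑ j ∈ S, rowNorm (Bhat - B * Q) j := by
  have hc : (0:ℝ) < (n : ℝ) * d := by positivity
  have hsd : (0:ℝ) < Real.sqrt d := Real.sqrt_pos.2 (by exact_mod_cast hd)
  have hlampos : 0 < lam := lt_of_lt_of_le (by linarith) hlam
  set W : Matrix (Fin n) (Fin d) ℝ := (X - Z * B) * Q + (Xhat - X * Q) with hWdef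
  set D : Matrix (Fin p) (Fin d) ℝ := Bhat - B * Q with hDdef
  -- algebraic identities
  have hW1 : Xhat - Z * (B * Q) = W := by
    rw [hWdef, Matrix.sub_mul, ← Matrix.mul_assoc]; abel
  have hW2 : Xhat - Z * Bhat = W - Z * D := by
    rw [hDdef, Matrix.mul_sub, hWdef, Matrix.sub_mul, ← Matrix.mul_assoc]; abel
  -- basic inequality from minimality
  have hbasic := hmin (B * Q)
  rw [glassoObj, glassoObj, hW1, hW2, expand_aux] at hbasic
  set IP := ∑ j : Fin p, ∑ k : Fin d, (∑ i : Fin n, W i k * Z i j) * D j k with hIPdef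
  -- bound on the cross term
  have hcross : (2 / ((n : ℝ) * d)) * IP
      ≤ (lam0 / Real.sqrt d) * ∑ j : Fin p, rowNorm D j := by
    rw [hIPdef, Finset.mul_sum, Finset.mul_sum]
    refine Finset.sum_le_sum fun j _ => ?_
    have hcs : ∑ k : Fin d, (∑ i : Fin n, W i k * Z i j) * D j k
        ≤ Real.sqrt (∑ k : Fin d, (∑ i : Fin n, W i k * Z i j) ^ 2) * rowNorm D j :=
      Real.sum_mul_le_sqrt_mul_sqrt Finset.univ _ _
    have h1 : (2 / ((n : ℝ) * d)) * (∑ k : Fin d, (∑ i : Fin n, W i k * Z i j) * D j k)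
        ≤ (2 / ((n : ℝ) * d)) *
          (Real.sqrt (∑ k : Fin d, (∑ i : Fin n, W i k * Z i j) ^ 2) * rowNorm D j) :=
      mul_le_mul_of_nonneg_left hcs (by positivity)
    refine h1.trans ?_
    rw [← mul_assoc]
    exact mul_le_mul_of_nonneg_right (hevent j) (rowNorm_nonneg _ _)
  -- row-norm facts
  have hBQ0 : ∀ j ∉ S, rowNorm (B * Q) j = 0 := by
    intro j hj
    have hz : ∀ l, B j l = 0 := fun l => congrFun (hS j hj) l
    have : ∀ k, (B * Q) j k = 0 := by
      intro k; rw [Matrix.mul_apply]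
      exact Finset.sum_eq_zero fun l _ => by rw [hz l, zero_mul]
    simp [rowNorm, this]
  have hDoff : ∀ j ∉ S, rowNorm D j = rowNorm Bhat j := by
    intro j hj
    have hz : ∀ l, B j l = 0 := fun l => congrFun (hS j hj) l
    have : ∀ k, D j k = Bhat j k := by
      intro k
      rw [hDdef, Matrix.sub_apply, Matrix.mul_apply]
      rw [Finset.sum_eq_zero fun l _ => by rw [hz l, zero_mul]]
      ring
    simp [rowNorm, this]
  have htri : ∀ j, rowNorm (B * Q) j ≤ rowNorm D j + rowNorm Bhat j := by
    intro j
    have h := sqrt_add_sq_le (fun k => -D j k) (fun k => Bhat j k)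
    have e1 : ∑ k : Fin d, (-D j k + Bhat j k) ^ 2 = ∑ k : Fin d, ((B * Q) j k) ^ 2 :=
      Finset.sum_congr rfl fun k _ => by rw [hDdef]; simp only [Matrix.sub_apply]; ring
    have e2 : ∑ k : Fin d, (-D j k) ^ 2 = ∑ k : Fin d, (D j k) ^ 2 :=
      Finset.sum_congr rfl fun k _ => by ring
    rw [e1, e2] at h
    exact h
  -- split sums over S and Sᶜ
  have hsplit : ∀ f : Fin p → ℝ, ∑ j : Fin p, f j = ∑ j ∈ S, f j + ∑ j ∈ Sᶜ, f j := by
    intro f; rw [Finset.sum_add_sum_compl]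
  set TS := ∑ j ∈ S, rowNorm Bhat j with hTS
  set TSc := ∑ j ∈ Sᶜ, rowNorm Bhat j with hTSc
  set RS := ∑ j ∈ S, rowNorm D j with hRS
  have hPSc : ∑ j ∈ Sᶜ, rowNorm (B * Q) j = 0 :=
    Finset.sum_eq_zero fun j hj => hBQ0 j (Finset.mem_compl.1 hj)
  have hRSc : ∑ j ∈ Sᶜ, rowNorm D j = TSc :=
    Finset.sum_congr rfl fun j hj => hDoff j (Finset.mem_compl.1 hj)
  have hPS : ∑ j ∈ S, rowNorm (B * Q) j ≤ RS + TS := by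
    rw [hRS, hTS, ← Finset.sum_add_distrib]
    exact Finset.sum_le_sum fun j _ => htri j
  have hRSnn : 0 ≤ RS := Finset.sum_nonneg fun j _ => rowNorm_nonneg _ _
  have hTScnn : 0 ≤ TSc := Finset.sum_nonneg fun j _ => rowNorm_nonneg _ _
  have hFnn : 0 ≤ frobSq (Z * D) := by
    rw [frobSq]
    exact Finset.sum_nonneg fun i _ => Finset.sum_nonneg fun k _ => sq_nonneg _
  -- put basic inequality in split form
  rw [hsplit (rowNorm Bhat), hsplit (rowNorm (B * Q)), hPSc] at hbasic
  rw [hsplit (rowNorm D), hRSc] at hcross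
  rw [← hTS, ← hTSc] at hbasic
  rw [← hRS] at hcross
  -- lam0/√d ≤ lam/(2√d)
  have hlam0le : lam0 / Real.sqrt d ≤ lam / Real.sqrt d / 2 := by
    rw [div_div, div_le_div_iff₀ hsd (by positivity)]
    nlinarith [mul_nonneg (by linarith : (0:ℝ) ≤ lam - 2 * lam0) hsd.le]
  have hb1 : (lam0 / Real.sqrt d) * (RS + TSc) ≤ (lam / Real.sqrt d / 2) * (RS + TSc) :=
    mul_le_mul_of_nonneg_right hlam0le (by linarith)
  have hPS' : (lam / Real.sqrt d) * (∑ j ∈ S, rowNorm (B * Q) j)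
      ≤ (lam / Real.sqrt d) * (RS + TS) :=
    mul_le_mul_of_nonneg_left hPS (by positivity)
  have hgoal : (3 * lam / Real.sqrt d) * RS = 3 * ((lam / Real.sqrt d) * RS) := by ring
  rw [hgoal]
  have hsd2 : (0:ℝ) ≤ lam / Real.sqrt d := by positivity
  ring_nf at hbasic hcross hb1 hPS' ⊢
  linarith [hbasic, hcross, hb1, hPS']
end

section
/- Let X ∈ ℝ^{n×d} have rank d, and suppose Σ̃_X = (1/n)Xᵀ M_n X is invertible, where M_n = I − (1/n)J. Define Σ̃_{XXᵀ} = (1/n)XXᵀ M_n XXᵀ and its pseudo-inverse square root via the spectral decomposition. Then the nonzero singular values of CCA_†(XXᵀ, Z) = Σ̃_{XXᵀ}^{†/2} (1/n) XXᵀ M_n Z Σ̃_Z^{−1/2} coincide with the nonzero singular values of CCA(X,Z) = Σ̃_X^{−1/2} (1/n) Xᵀ M_n Z Σ̃_Z^{−1/2}. -/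
/-!
Write `A = Σ̃_X`, so that `Σ̃_{XXᵀ} = X A Xᵀ =: H`, and let `Q = (H^{†/2})²`. The functional
calculus gives `Q H² = H` for positive semidefinite `H`; since `A` and `XᵀX` are invertible this
forces `Q H X = X` and then `Xᵀ Q X = A⁻¹ = (A^{-1/2})²`. Hence `CCA_† = (H^{†/2} X) B R` and
`CCA = A^{-1/2} B R` have the same Gram matrix `Rᵀ Bᵀ A⁻¹ B R`, so even their full multisets of
singular values agree.
-/

open scoped BigOperators
open Matrix

/-- The centering matrix `M_n = I − (1/n)J`. -/
noncomputable def centering (n : ℕ) : Matrix (Fin n) (Fin n) ℝ :=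
  1 - (n : ℝ)⁻¹ • Matrix.of (fun _ _ => (1 : ℝ))

/-- Inverse square root of a symmetric matrix via the spectral decomposition
(junk value `0` on non-Hermitian input). -/
noncomputable def invSqrt {m : ℕ} (A : Matrix (Fin m) (Fin m) ℝ) :
    Matrix (Fin m) (Fin m) ℝ :=
  if h : A.IsHermitian then
    (h.eigenvectorUnitary : Matrix (Fin m) (Fin m) ℝ) *
      Matrix.diagonal (fun i => (Real.sqrt (h.eigenvalues i))⁻¹) *
      star (h.eigenvectorUnitary : Matrix (Fin m) (Fin m) ℝ)
  else 0

/-- Pseudo-inverse square root `H^{†/2}` of a symmetric matrix, defined via the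
spectral decomposition with zero eigenvalues sent to zero (junk value `0` on
non-Hermitian input). -/
noncomputable def pinvSqrt {m : ℕ} (A : Matrix (Fin m) (Fin m) ℝ) :
    Matrix (Fin m) (Fin m) ℝ :=
  if h : A.IsHermitian then
    (h.eigenvectorUnitary : Matrix (Fin m) (Fin m) ℝ) *
      Matrix.diagonal (fun i =>
        if h.eigenvalues i = 0 then 0 else (Real.sqrt (h.eigenvalues i))⁻¹) *
      star (h.eigenvectorUnitary : Matrix (Fin m) (Fin m) ℝ)
  else 0

/-- The CCA matrix `Σ̃_X^{−1/2} (1/n) Xᵀ M_n Z Σ̃_Z^{−1/2}`. -/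
noncomputable def CCA {n d p : ℕ} (X : Matrix (Fin n) (Fin d) ℝ)
    (Z : Matrix (Fin n) (Fin p) ℝ) : Matrix (Fin d) (Fin p) ℝ :=
  invSqrt ((n : ℝ)⁻¹ • (Xᵀ * centering n * X)) *
    ((n : ℝ)⁻¹ • (Xᵀ * centering n * Z)) *
    invSqrt ((n : ℝ)⁻¹ • (Zᵀ * centering n * Z))

/-- The regularization-free full-network CCA matrix
`CCA_†(XXᵀ, Z) = Σ̃_{XXᵀ}^{†/2} (1/n) XXᵀ M_n Z Σ̃_Z^{−1/2}`. -/
noncomputable def CCAdagger {n d p : ℕ} (X : Matrix (Fin n) (Fin d) ℝ)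
    (Z : Matrix (Fin n) (Fin p) ℝ) : Matrix (Fin n) (Fin p) ℝ :=
  pinvSqrt ((n : ℝ)⁻¹ • (X * Xᵀ * centering n * X * Xᵀ)) *
    ((n : ℝ)⁻¹ • (X * Xᵀ * centering n * Z)) *
    invSqrt ((n : ℝ)⁻¹ • (Zᵀ * centering n * Z))

/-- The multiset of singular values of a real matrix (square roots of the
eigenvalues of `MᵀM`). -/
noncomputable def singularValuesMultiset {a b : ℕ} (M : Matrix (Fin a) (Fin b) ℝ) :
    Multiset ℝ :=
  Finset.univ.val.map fun i : Fin b =>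
    Real.sqrt ((Matrix.isHermitian_conjTranspose_mul_self M).eigenvalues i)

lemma pinvSqrt_eq_cfc {m : ℕ} {H : Matrix (Fin m) (Fin m) ℝ} (hH : H.IsHermitian) :
    pinvSqrt H = cfc (fun x : ℝ => if x = 0 then 0 else (√x)⁻¹) H := by
  rw [pinvSqrt, dif_pos hH, hH.cfc_eq, IsHermitian.cfc, Unitary.conjStarAlgAut_apply]
  rfl

lemma pinvSqrt_mul_pinvSqrt_mul_sq {m : ℕ} {H : Matrix (Fin m) (Fin m) ℝ}
    (hH : H.PosSemidef) : pinvSqrt H * pinvSqrt H * (H * H) = H := by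
  have hcont (f : ℝ → ℝ) : ContinuousOn f (spectrum ℝ H) := finite_real_spectrum.continuousOn f
  have hsa : IsSelfAdjoint H := hH.isHermitian
  set g : ℝ → ℝ := fun x => if x = 0 then 0 else (√x)⁻¹
  calc pinvSqrt H * pinvSqrt H * (H * H)
      = cfc g H * cfc g H * (cfc id H * cfc id H) := by
        rw [pinvSqrt_eq_cfc hH.isHermitian, cfc_id ℝ H hsa]
    _ = cfc (fun x => g x * g x * (x * x)) H := by
        rw [← cfc_mul g g H (hcont _) (hcont _), ← cfc_mul id id H (hcont _) (hcont _),
          ← cfc_mul _ _ H (hcont _) (hcont _)]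
        rfl
    _ = cfc id H := cfc_congr fun x hx => ?_
    _ = H := cfc_id ℝ H hsa
  rw [hH.isHermitian.spectrum_real_eq_range_eigenvalues] at hx
  obtain ⟨i, rfl⟩ := hx
  rcases (hH.eigenvalues_nonneg i).eq_or_lt with h | h
  · simp [g, ← h]
  · simp only [g, if_neg h.ne', id]
    rw [← mul_inv, Real.mul_self_sqrt h.le]
    field_simp

lemma transpose_pinvSqrt {m : ℕ} (H : Matrix (Fin m) (Fin m) ℝ) :
    (pinvSqrt H)ᵀ = pinvSqrt H := by
  unfold pinvSqrt
  split_ifs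
  · rw [← conjTranspose_eq_transpose_of_trivial, star_eq_conjTranspose]
    exact isHermitian_mul_mul_conjTranspose _ (isHermitian_diagonal_of_self_adjoint _ (by ext; simp))
  · exact transpose_zero

lemma invSqrt_eq_pinvSqrt {m : ℕ} {A : Matrix (Fin m) (Fin m) ℝ} (hA : A.PosDef) :
    invSqrt A = pinvSqrt A := by
  rw [invSqrt, pinvSqrt, dif_pos hA.isHermitian, dif_pos hA.isHermitian]
  simp only [if_neg (hA.eigenvalues_pos _).ne']

lemma transpose_invSqrt {m : ℕ} {A : Matrix (Fin m) (Fin m) ℝ} (hA : A.PosDef) :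
    (invSqrt A)ᵀ = invSqrt A := by
  rw [invSqrt_eq_pinvSqrt hA, transpose_pinvSqrt]

lemma invSqrt_mul_invSqrt {m : ℕ} {A : Matrix (Fin m) (Fin m) ℝ} (hA : A.PosDef) :
    invSqrt A * invSqrt A = A⁻¹ := by
  refine (inv_eq_left_inv (hA.isUnit.mul_right_cancel ?_)).symm
  rw [invSqrt_eq_pinvSqrt hA, Matrix.mul_assoc _ A, pinvSqrt_mul_pinvSqrt_mul_sq hA.posSemidef,
    Matrix.one_mul]

lemma isUnit_transpose_mul_self_of_isUnit_mul {ι κ : Type*} [Fintype ι] [Fintype κ]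
    [DecidableEq κ] {X : Matrix ι κ ℝ} {K : Matrix κ ι ℝ} (h : IsUnit (K * X)) :
    IsUnit (Xᵀ * X) := by
  have hinj : Function.Injective X.mulVec := fun u v huv =>
    mulVec_injective_of_isUnit h (by rw [← mulVec_mulVec, ← mulVec_mulVec, huv])
  simpa [conjTranspose_eq_transpose_of_trivial] using (PosDef.conjTranspose_mul_self X hinj).isUnit

lemma transpose_mul_pinvSqrt_mul_pinvSqrt_mul {n d : ℕ} {A : Matrix (Fin d) (Fin d) ℝ}
    {X : Matrix (Fin n) (Fin d) ℝ} (hA : A.PosDef) (hX : IsUnit (Xᵀ * X)) :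
    Xᵀ * (pinvSqrt (X * A * Xᵀ) * pinvSqrt (X * A * Xᵀ)) * X = A⁻¹ := by
  set H := X * A * Xᵀ
  set Q := pinvSqrt H * pinvSqrt H
  have hH : H.PosSemidef := by
    simpa [conjTranspose_eq_transpose_of_trivial] using hA.posSemidef.mul_mul_conjTranspose_same X
  have hQHX : Q * H * X = X := by
    let := (hA.isUnit.mul hX).invertible
    refine (Matrix.mul_left_inj_of_invertible (A * (Xᵀ * X))).mp ?_
    calc Q * H * X * (A * (Xᵀ * X)) = Q * (H * H) * X := by simp only [H, Matrix.mul_assoc]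
      _ = X * (A * (Xᵀ * X)) := by
        rw [pinvSqrt_mul_pinvSqrt_mul_sq hH]; simp only [H, Matrix.mul_assoc]
  let := hX.invertible
  refine (inv_eq_left_inv ((Matrix.mul_left_inj_of_invertible (Xᵀ * X)).mp ?_)).symm
  calc Xᵀ * Q * X * A * (Xᵀ * X) = Xᵀ * (Q * H * X) := by simp only [H, Matrix.mul_assoc]
    _ = 1 * (Xᵀ * X) := by rw [hQHX, Matrix.one_mul]

lemma singularValuesMultiset_eq_of_transpose_mul_self_eq {a a' b : ℕ}
    {M : Matrix (Fin a) (Fin b) ℝ} {N : Matrix (Fin a') (Fin b) ℝ} (h : Mᵀ * M = Nᵀ * N) :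
    singularValuesMultiset M = singularValuesMultiset N := by
  unfold singularValuesMultiset
  congr! 5

lemma transpose_mul_self_mul_eq {ι ι' κ μ α : Type*} [Fintype ι] [Fintype ι'] [Fintype κ]
    [CommSemiring α] {P : Matrix ι κ α} {Q : Matrix ι' κ α} (h : Pᵀ * P = Qᵀ * Q)
    (M : Matrix κ μ α) : (P * M)ᵀ * (P * M) = (Q * M)ᵀ * (Q * M) := by
  rw [transpose_mul, transpose_mul, Matrix.mul_assoc, ← Matrix.mul_assoc Pᵀ, h]
  simp only [Matrix.mul_assoc]

theorem cca_dagger_singular_values_general (n d p : ℕ)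
    (X : Matrix (Fin n) (Fin d) ℝ) (Z : Matrix (Fin n) (Fin p) ℝ)
    (hX : ((n : ℝ)⁻¹ • (Xᵀ * centering n * X)).PosDef) :
    (singularValuesMultiset (CCAdagger X Z)).filter (fun x => x ≠ 0) =
      (singularValuesMultiset (CCA X Z)).filter (fun x => x ≠ 0) := by
  set A := (n : ℝ)⁻¹ • (Xᵀ * centering n * X)
  set B := (n : ℝ)⁻¹ • (Xᵀ * centering n * Z)
  set R := invSqrt ((n : ℝ)⁻¹ • (Zᵀ * centering n * Z))
  set P := pinvSqrt (X * A * Xᵀ)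
  have hXX : IsUnit (Xᵀ * X) := isUnit_transpose_mul_self_of_isUnit_mul
    (K := (n : ℝ)⁻¹ • (Xᵀ * centering n)) (by simpa [A, Matrix.smul_mul] using hX.isUnit)
  have hdagger : CCAdagger X Z = P * X * (B * R) := by
    have hcov : (n : ℝ)⁻¹ • (X * Xᵀ * centering n * X * Xᵀ) = X * A * Xᵀ := by
      simp only [A, Matrix.mul_smul, Matrix.smul_mul, Matrix.mul_assoc]
    have hcross : (n : ℝ)⁻¹ • (X * Xᵀ * centering n * Z) = X * B := by
      simp only [B, Matrix.mul_smul, Matrix.mul_assoc]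
    rw [CCAdagger, hcov, hcross]
    simp only [P, R, Matrix.mul_assoc]
  have hgram : (P * X)ᵀ * (P * X) = (invSqrt A)ᵀ * invSqrt A := by
    rw [transpose_invSqrt hX, invSqrt_mul_invSqrt hX,
      ← transpose_mul_pinvSqrt_mul_pinvSqrt_mul hX hXX, transpose_mul, transpose_pinvSqrt]
    simp only [P, Matrix.mul_assoc]
  congr 1
  apply singularValuesMultiset_eq_of_transpose_mul_self_eq
  rw [hdagger, CCA, Matrix.mul_assoc (invSqrt A)]
  exact transpose_mul_self_mul_eq hgram (B * R)

/-- Lemma (fullnettrue:singval): if `X` has rank `d` and the sample covariances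
`Σ̃_X` and `Σ̃_Z` are positive definite (hence invertible), then the nonzero singular
values of `CCA_†(XXᵀ, Z)` coincide with the nonzero singular values of `CCA(X, Z)`. -/
theorem cca_dagger_singular_values (n d p : ℕ) (hn : 0 < n)
    (X : Matrix (Fin n) (Fin d) ℝ) (Z : Matrix (Fin n) (Fin p) ℝ)
    (hrank : X.rank = d)
    (hX : ((n : ℝ)⁻¹ • (Xᵀ * centering n * X)).PosDef)
    (hZ : ((n : ℝ)⁻¹ • (Zᵀ * centering n * Z)).PosDef) :
    (singularValuesMultiset (CCAdagger X Z)).filter (fun x => x ≠ 0) =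
      (singularValuesMultiset (CCA X Z)).filter (fun x => x ≠ 0) :=
  cca_dagger_singular_values_general n d p X Z hX
end

section
/- (Procrustes bound via sin-theta.) For Ŵ, W̃ ∈ ℝ^{n×d} with orthonormal columns, there exists an orthogonal matrix O ∈ O(d) such that ‖ŴO − W̃‖ ≤ √2 ‖sin Θ(Ŵ, W̃)‖, and moreover with Q_W the polar orthogonal factor of W̃ᵀŴ, ‖Ŵ − W̃Q_W‖ ≤ ‖sin Θ(Ŵ, W̃)‖ + ‖sin Θ(Ŵ, W̃)‖². -/
open scoped BigOperators
open Matrix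

/-- Operator (spectral) norm of a real matrix. -/
noncomputable def opNorm {a b : ℕ} (M : Matrix (Fin a) (Fin b) ℝ) : ℝ :=
  ‖LinearMap.toContinuousLinearMap (Matrix.toEuclideanLin M)‖

/-!
Write `M = W̃ᵀŴ = U₁ diag(D) U₂ᵀ` and `S = (1 - W̃W̃ᵀ)Ŵ`. Then `SᵀS = 1 - MᵀM = U₂ (1 - D²) U₂ᵀ`,
so `‖S‖² = maxₖ |1 - Dₖ²|`, and since `0 ≤ Dₖ ≤ 1` this dominates `‖1 - diag D‖ = maxₖ |1 - Dₖ|`.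
For `O = U₂U₁ᵀ` one computes `(ŴO - W̃)ᵀ(ŴO - W̃) = 2 U₁ (1 - diag D) U₁ᵀ`, whence `‖ŴO - W̃‖² ≤ 2‖S‖²`;
and `Ŵ - W̃U₁U₂ᵀ = S + W̃ U₁ (diag D - 1) U₂ᵀ` gives the second bound.
-/

open scoped Matrix.Norms.L2Operator

namespace Matrix

variable {m n : Type*} [Fintype m] [Fintype n] [DecidableEq n]

lemma l2_opNorm_transpose [DecidableEq m] (A : Matrix m n ℝ) : ‖Aᵀ‖ = ‖A‖ := by
  rw [← conjTranspose_eq_transpose_of_trivial, l2_opNorm_conjTranspose]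

lemma l2_opNorm_transpose_mul_self (A : Matrix m n ℝ) : ‖Aᵀ * A‖ = ‖A‖ * ‖A‖ := by
  rw [← conjTranspose_eq_transpose_of_trivial, l2_opNorm_conjTranspose_mul_self]

lemma l2_opNorm_le_one_of_transpose_mul_self_eq_one {A : Matrix m n ℝ}
    (h : Aᵀ * A = 1) : ‖A‖ ≤ 1 := by
  have h1 : ‖(1 : Matrix n n ℝ)‖ ≤ 1 := by
    rw [← diagonal_one, l2_opNorm_diagonal]
    exact pi_norm_le_iff_of_nonneg zero_le_one |>.mpr fun _ ↦ by simp
  rw [← h, l2_opNorm_transpose_mul_self] at h1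
  nlinarith [norm_nonneg A]

lemma l2_opNorm_mul_mul_transpose_of_mem_orthogonalGroup
    {U V : Matrix n n ℝ} (hU : U ∈ orthogonalGroup n ℝ) (hV : V ∈ orthogonalGroup n ℝ)
    (A : Matrix n n ℝ) : ‖U * A * Vᵀ‖ = ‖A‖ := by
  rw [CStarRing.norm_mul_mem_unitary _ (transpose_mem_unitaryGroup_iff.mpr hV),
    CStarRing.norm_mem_unitary_mul _ hU]

lemma l2_opNorm_one_sub_diagonal_le {D : n → ℝ} (hD₀ : ∀ k, 0 ≤ D k)
    (hD₁ : ‖diagonal D‖ ≤ 1) : ‖1 - diagonal D‖ ≤ ‖1 - diagonal D * diagonal D‖ := by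
  rw [diagonal_mul_diagonal, ← diagonal_one, diagonal_sub, diagonal_sub,
    l2_opNorm_diagonal, l2_opNorm_diagonal]
  rw [l2_opNorm_diagonal] at hD₁
  refine pi_norm_le_iff_of_nonneg (norm_nonneg _) |>.mpr fun k ↦ ?_
  have hk : D k ≤ 1 := (le_abs_self _).trans <| (norm_le_pi_norm D k).trans hD₁
  refine le_trans ?_ (norm_le_pi_norm _ k)
  simp only [Real.norm_eq_abs]
  rw [abs_of_nonneg (by linarith [hD₀ k]), abs_of_nonneg (by nlinarith [hD₀ k])]
  nlinarith [hD₀ k]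

lemma transpose_mul_cancel_left {k : Type*} {A : Matrix m n ℝ} (hA : Aᵀ * A = 1)
    (X : Matrix n k ℝ) : Aᵀ * (A * X) = X := by
  rw [← Matrix.mul_assoc, hA, Matrix.one_mul]

lemma l2_opNorm_sub_mul_self {A B : Matrix m n ℝ} (hA : Aᵀ * A = 1) (hB : Bᵀ * B = 1)
    (hBA : (Bᵀ * A).IsSymm) : ‖A - B‖ * ‖A - B‖ = 2 * ‖1 - Bᵀ * A‖ := by
  have hAB : Aᵀ * B = Bᵀ * A := by rw [← hBA.eq, transpose_mul, transpose_transpose]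
  have hgram : (A - B)ᵀ * (A - B) = (2 : ℝ) • (1 - Bᵀ * A) := by
    rw [transpose_sub, Matrix.sub_mul, Matrix.mul_sub, Matrix.mul_sub, hA, hB, hAB, two_smul]
    abel
  rw [← l2_opNorm_transpose_mul_self, hgram, norm_smul, Real.norm_two]

lemma transpose_mul_self_one_sub_mul_transpose_mul [DecidableEq m] {A B : Matrix m n ℝ}
    (hA : Aᵀ * A = 1) (hB : Bᵀ * B = 1) :
    ((1 - B * Bᵀ) * A)ᵀ * ((1 - B * Bᵀ) * A) = 1 - (Bᵀ * A)ᵀ * (Bᵀ * A) := by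
  simp only [transpose_mul, transpose_sub, transpose_transpose, Matrix.sub_mul, Matrix.mul_sub,
    Matrix.one_mul, Matrix.mul_assoc, transpose_mul_cancel_left hB]
  rw [hA]
  abel

lemma l2_opNorm_sub_mul_le [DecidableEq m] {A B : Matrix m n ℝ} (hB : Bᵀ * B = 1)
    (Q : Matrix n n ℝ) : ‖A - B * Q‖ ≤ ‖(1 - B * Bᵀ) * A‖ + ‖Bᵀ * A - Q‖ := by
  have hsplit : A - B * Q = (1 - B * Bᵀ) * A + B * (Bᵀ * A - Q) := by
    simp only [Matrix.sub_mul, Matrix.mul_sub, Matrix.one_mul, Matrix.mul_assoc]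
    abel
  calc ‖A - B * Q‖ ≤ ‖(1 - B * Bᵀ) * A‖ + ‖B‖ * ‖Bᵀ * A - Q‖ := by
        rw [hsplit]
        exact (norm_add_le _ _).trans (add_le_add_right (l2_opNorm_mul _ _) _)
    _ ≤ ‖(1 - B * Bᵀ) * A‖ + ‖Bᵀ * A - Q‖ := by
        grw [l2_opNorm_le_one_of_transpose_mul_self_eq_one hB, one_mul]

section SVD

variable [DecidableEq m] {What Wtil : Matrix m n ℝ} {U₁ U₂ : Matrix n n ℝ} {D : n → ℝ}

lemma l2_opNorm_one_sub_diagonal_le_sq (hWhat : Whatᵀ * What = 1)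
    (hWtil : Wtilᵀ * Wtil = 1) (hU₁ : U₁ ∈ orthogonalGroup n ℝ) (hU₂ : U₂ ∈ orthogonalGroup n ℝ)
    (hD : ∀ k, 0 ≤ D k) (hsvd : Wtilᵀ * What = U₁ * diagonal D * U₂ᵀ) :
    ‖1 - diagonal D‖ ≤ ‖(1 - Wtil * Wtilᵀ) * What‖ ^ 2 := by
  have hD₁ : ‖diagonal D‖ ≤ 1 := calc
    ‖diagonal D‖ = ‖Wtilᵀ * What‖ := by
      rw [hsvd, l2_opNorm_mul_mul_transpose_of_mem_orthogonalGroup hU₁ hU₂]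
    _ ≤ ‖Wtilᵀ‖ * ‖What‖ := l2_opNorm_mul _ _
    _ ≤ 1 := by
      rw [l2_opNorm_transpose]
      exact mul_le_one₀ (l2_opNorm_le_one_of_transpose_mul_self_eq_one hWtil) (norm_nonneg _)
        (l2_opNorm_le_one_of_transpose_mul_self_eq_one hWhat)
  have hgram : 1 - (Wtilᵀ * What)ᵀ * (Wtilᵀ * What) = U₂ * (1 - diagonal D * diagonal D) * U₂ᵀ := by
    rw [hsvd, Matrix.mul_sub, Matrix.sub_mul, Matrix.mul_one, (mem_orthogonalGroup_iff n ℝ).mp hU₂]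
    simp only [transpose_mul, transpose_transpose, diagonal_transpose, Matrix.mul_assoc,
      transpose_mul_cancel_left ((mem_orthogonalGroup_iff' n ℝ).mp hU₁)]
  calc ‖1 - diagonal D‖ ≤ ‖1 - diagonal D * diagonal D‖ := l2_opNorm_one_sub_diagonal_le hD hD₁
    _ = ‖1 - (Wtilᵀ * What)ᵀ * (Wtilᵀ * What)‖ := by
      rw [hgram, l2_opNorm_mul_mul_transpose_of_mem_orthogonalGroup hU₂ hU₂]
    _ = ‖(1 - Wtil * Wtilᵀ) * What‖ ^ 2 := by
      rw [← transpose_mul_self_one_sub_mul_transpose_mul hWhat hWtil,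
        l2_opNorm_transpose_mul_self, sq]

lemma l2_opNorm_mul_sub_le_sqrt_two_mul (hWhat : Whatᵀ * What = 1)
    (hWtil : Wtilᵀ * Wtil = 1) (hU₁ : U₁ ∈ orthogonalGroup n ℝ) (hU₂ : U₂ ∈ orthogonalGroup n ℝ)
    (hD : ∀ k, 0 ≤ D k) (hsvd : Wtilᵀ * What = U₁ * diagonal D * U₂ᵀ) :
    ‖What * (U₂ * U₁ᵀ) - Wtil‖ ≤ √2 * ‖(1 - Wtil * Wtilᵀ) * What‖ := by
  have hO : (U₂ * U₁ᵀ)ᵀ * (U₂ * U₁ᵀ) = 1 :=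
    (mem_orthogonalGroup_iff' n ℝ).mp (mul_mem hU₂ (transpose_mem_unitaryGroup_iff.mpr hU₁))
  have hWO : (What * (U₂ * U₁ᵀ))ᵀ * (What * (U₂ * U₁ᵀ)) = 1 := by
    rw [transpose_mul, Matrix.mul_assoc, transpose_mul_cancel_left hWhat, hO]
  have hrot : Wtilᵀ * (What * (U₂ * U₁ᵀ)) = U₁ * diagonal D * U₁ᵀ := by
    rw [← Matrix.mul_assoc, hsvd]
    simp only [Matrix.mul_assoc, transpose_mul_cancel_left ((mem_orthogonalGroup_iff' n ℝ).mp hU₂)]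
  have hsymm : (U₁ * diagonal D * U₁ᵀ).IsSymm := by
    simp only [IsSymm, transpose_mul, transpose_transpose, diagonal_transpose, Matrix.mul_assoc]
  have hconj : 1 - U₁ * diagonal D * U₁ᵀ = U₁ * (1 - diagonal D) * U₁ᵀ := by
    rw [Matrix.mul_sub, Matrix.sub_mul, Matrix.mul_one, (mem_orthogonalGroup_iff n ℝ).mp hU₁]
  have hsq : ‖What * (U₂ * U₁ᵀ) - Wtil‖ * ‖What * (U₂ * U₁ᵀ) - Wtil‖ ≤
      2 * ‖(1 - Wtil * Wtilᵀ) * What‖ ^ 2 := by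
    rw [l2_opNorm_sub_mul_self hWO hWtil (hrot ▸ hsymm), hrot, hconj,
      l2_opNorm_mul_mul_transpose_of_mem_orthogonalGroup hU₁ hU₁]
    gcongr
    exact l2_opNorm_one_sub_diagonal_le_sq hWhat hWtil hU₁ hU₂ hD hsvd
  refine nonneg_le_nonneg_of_sq_le_sq (by positivity) (hsq.trans_eq ?_)
  rw [mul_mul_mul_comm, Real.mul_self_sqrt zero_le_two, sq]

lemma l2_opNorm_sub_mul_mul_transpose_le (hWhat : Whatᵀ * What = 1)
    (hWtil : Wtilᵀ * Wtil = 1) (hU₁ : U₁ ∈ orthogonalGroup n ℝ) (hU₂ : U₂ ∈ orthogonalGroup n ℝ)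
    (hD : ∀ k, 0 ≤ D k) (hsvd : Wtilᵀ * What = U₁ * diagonal D * U₂ᵀ) :
    ‖What - Wtil * (U₁ * U₂ᵀ)‖ ≤
      ‖(1 - Wtil * Wtilᵀ) * What‖ + ‖(1 - Wtil * Wtilᵀ) * What‖ ^ 2 := calc
  ‖What - Wtil * (U₁ * U₂ᵀ)‖ ≤ ‖(1 - Wtil * Wtilᵀ) * What‖ + ‖Wtilᵀ * What - U₁ * U₂ᵀ‖ :=
    l2_opNorm_sub_mul_le hWtil _
  _ = ‖(1 - Wtil * Wtilᵀ) * What‖ + ‖1 - diagonal D‖ := by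
    have hconj : U₁ * diagonal D * U₂ᵀ - U₁ * U₂ᵀ = U₁ * (diagonal D - 1) * U₂ᵀ := by
      rw [Matrix.mul_sub, Matrix.sub_mul, Matrix.mul_one]
    rw [hsvd, hconj, l2_opNorm_mul_mul_transpose_of_mem_orthogonalGroup hU₁ hU₂, norm_sub_rev]
  _ ≤ _ := by grw [l2_opNorm_one_sub_diagonal_le_sq hWhat hWtil hU₁ hU₂ hD hsvd]

end SVD

end Matrix

-- `opNorm` is definitionally the norm `‖·‖` of `Matrix.Norms.L2Operator`.
/-- Procrustes bound via sin-theta (Cai–Zhang 2018, Lemma 1, plus the polar-factor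
bound): for `Ŵ, W̃ ∈ ℝ^{n×d}` with orthonormal columns, there is an orthogonal
`O ∈ O(d)` with `‖ŴO − W̃‖ ≤ √2 ‖sinΘ(Ŵ,W̃)‖`, where `‖sinΘ(Ŵ,W̃)‖` denotes the
operator norm of `(I − W̃W̃ᵀ)Ŵ`; moreover with `Q_W = U₁U₂ᵀ` the orthogonal polar
factor of the SVD `W̃ᵀŴ = U₁DU₂ᵀ`, `‖Ŵ − W̃Q_W‖ ≤ ‖sinΘ‖ + ‖sinΘ‖²`. -/
theorem procrustes_sinTheta_bounds (n d : ℕ)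
    (What Wtil : Matrix (Fin n) (Fin d) ℝ)
    (hWhat : Whatᵀ * What = 1) (hWtil : Wtilᵀ * Wtil = 1)
    (U₁ U₂ : Matrix (Fin d) (Fin d) ℝ)
    (hU₁ : U₁ ∈ Matrix.orthogonalGroup (Fin d) ℝ)
    (hU₂ : U₂ ∈ Matrix.orthogonalGroup (Fin d) ℝ)
    (D : Fin d → ℝ) (hD : ∀ k, 0 ≤ D k)
    (hsvd : Wtilᵀ * What = U₁ * Matrix.diagonal D * U₂ᵀ) :
    (∃ O ∈ Matrix.orthogonalGroup (Fin d) ℝ,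
      opNorm (What * O - Wtil) ≤
        Real.sqrt 2 * opNorm ((1 - Wtil * Wtilᵀ) * What)) ∧
      opNorm (What - Wtil * (U₁ * U₂ᵀ)) ≤
        opNorm ((1 - Wtil * Wtilᵀ) * What) + (opNorm ((1 - Wtil * Wtilᵀ) * What)) ^ 2 :=
  ⟨⟨U₂ * U₁ᵀ, mul_mem hU₂ (transpose_mem_unitaryGroup_iff.mpr hU₁),
    l2_opNorm_mul_sub_le_sqrt_two_mul hWhat hWtil hU₁ hU₂ hD hsvd⟩,
    l2_opNorm_sub_mul_mul_transpose_le hWhat hWtil hU₁ hU₂ hD hsvd⟩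
end
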